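/- Let D = (E, F) be a delta-matroid and e ∈ E of type uu (e lies in no feasible set of size r(D_min) or r(D_min)+1, and e lies in every feasible set of size r(D_max) or r(D_max)−1). Then w(D^{*|e}) = w(D) − 2 and w(D^{×|e}) = w(D). -/

import Mathlib

open Finset Polynomial

variable {α : Type*} [DecidableEq α]

/-- The twist of a collection of feasible sets with respect to `A`. -/
noncomputable def SS.twist (A : Finset α) (F : Finset (Finset α)) : Finset (Finset α) :=
  F.image (fun X => symmDiff A X)

/-- Loop complementation at a single element `e`. -/
noncomputable def SS.lc (e : α) (F : Finset (Finset α)) : Finset (Finset α) :=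
  symmDiff F ((F.filter (fun X => e ∉ X)).image (insert e))

/-- The two generating operations: twist `*` and loop complementation `×`. -/
inductive SS.Op | star | cross

/-- Apply a single operation at a single element. -/
noncomputable def SS.opElem : SS.Op → α → Finset (Finset α) → Finset (Finset α)
  | .star, e, F => SS.twist {e} F
  | .cross, e, F => SS.lc e F

/-- Apply a word in `{*, ×}` at a single element. -/
noncomputable def SS.wordElem (w : List SS.Op) (e : α) (F : Finset (Finset α)) : Finset (Finset α) :=
  w.foldl (fun F o => SS.opElem o e F) F

/-- Apply a word in `{*, ×}` elementwise on a subset `A`. -/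
noncomputable def SS.wordOn (w : List SS.Op) (A : Finset α) (F : Finset (Finset α)) : Finset (Finset α) :=
  A.toList.foldl (fun F e => SS.wordElem w e F) F

/-- Size of a largest feasible set. -/
noncomputable def SS.rmax (F : Finset (Finset α)) : ℕ := F.sup Finset.card

/-- Size of a smallest feasible set. -/
noncomputable def SS.rmin (F : Finset (Finset α)) : ℕ := sInf (Finset.card '' (F : Set (Finset α)))

/-- The width of a set system. -/
noncomputable def SS.width (F : Finset (Finset α)) : ℕ := SS.rmax F - SS.rmin F

/-- The minimum-cardinality feasible sets. -/
noncomputable def SS.Fmin (F : Finset (Finset α)) : Finset (Finset α) :=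
  F.filter (fun X => X.card = SS.rmin F)

/-- The maximum-cardinality feasible sets. -/
noncomputable def SS.Fmax (F : Finset (Finset α)) : Finset (Finset α) :=
  F.filter (fun X => X.card = SS.rmax F)

/-- The partial-`w` polynomial of a set system with ground set `E`. -/
noncomputable def SS.poly (w : List SS.Op) (E : Finset α) (F : Finset (Finset α)) :
    Polynomial ℤ :=
  ∑ A ∈ E.powerset, (Polynomial.X : Polynomial ℤ) ^ SS.width (SS.wordOn w A F)

/-- A proper set system satisfying the symmetric exchange axiom. -/
noncomputable def SS.IsDeltaMatroid (F : Finset (Finset α)) : Prop :=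
  F.Nonempty ∧ ∀ X ∈ F, ∀ Y ∈ F, ∀ u ∈ symmDiff X Y,
    ∃ v ∈ symmDiff X Y, symmDiff X {u, v} ∈ F

/-- Apply a sequence of single-element twists and loop complementations. -/
noncomputable def SS.seqApply : List (SS.Op × α) → Finset (Finset α) → Finset (Finset α)
  | [], F => F
  | (o, e) :: s, F => SS.seqApply s (SS.opElem o e F)

/-- A set system is vf-safe if every sequence of single-element twists and loop
complementations yields a delta-matroid. -/
noncomputable def SS.VfSafe (F : Finset (Finset α)) : Prop :=
  ∀ s : List (SS.Op × α), SS.IsDeltaMatroid (SS.seqApply s F)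

/-- The direct sum of two set systems. -/
noncomputable def SS.dsum (F F' : Finset (Finset α)) : Finset (Finset α) :=
  (F ×ˢ F').image (fun p => p.1 ∪ p.2)


/-
Toggling a type-uu element `e` shrinks a feasible set containing `e`, which has size at least
`r_min + 2`, and grows one avoiding `e`, which has size at most `r_max - 2`. So the twist puts
every feasible set in the window `[r_min + 1, r_max - 1]`, and the extremal sets land on its
endpoints. Loop complementation only adds sets `X ∪ {e}` with `e ∉ X` and `X` feasible, whose
sizes lie in `[r_min + 1, r_max - 1]`, and removes no extremal set, so the width is unchanged.
-/

namespace SS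

lemma card_singleton_symmDiff (e : α) (X : Finset α) :
    (symmDiff {e} X).card = if e ∈ X then X.card - 1 else X.card + 1 := by
  split_ifs with h
  · have : symmDiff {e} X = X.erase e := by
      ext a; by_cases ha : a = e <;> simp [Finset.mem_symmDiff, ha, h]
    rw [this, Finset.card_erase_of_mem h]
  · have : symmDiff {e} X = insert e X := by
      ext a; by_cases ha : a = e <;> simp [Finset.mem_symmDiff, ha, h]
    rw [this, Finset.card_insert_of_notMem h]

lemma mem_lc_iff {e : α} {F : Finset (Finset α)} {Y : Finset α} :
    Y ∈ lc e F ↔ (Y ∈ F ∧ ¬(e ∈ Y ∧ Y.erase e ∈ F)) ∨ (e ∈ Y ∧ Y.erase e ∈ F ∧ Y ∉ F) := by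
  have hS : Y ∈ (F.filter (fun X => e ∉ X)).image (insert e) ↔ e ∈ Y ∧ Y.erase e ∈ F := by
    simp only [Finset.mem_image, Finset.mem_filter]
    constructor
    · rintro ⟨X, ⟨hX, he⟩, rfl⟩
      exact ⟨Finset.mem_insert_self e X, by rwa [Finset.erase_insert he]⟩
    · rintro ⟨he, hY⟩
      exact ⟨Y.erase e, ⟨hY, Finset.notMem_erase e Y⟩, Finset.insert_erase he⟩
  rw [lc, Finset.mem_symmDiff, hS, and_assoc]

section Ranks

variable {β : Type*} {F : Finset (Finset β)}

lemma rmin_le_card {X : Finset β} (hX : X ∈ F) : rmin F ≤ X.card :=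
  Nat.sInf_le ⟨X, hX, rfl⟩

lemma card_le_rmax {X : Finset β} (hX : X ∈ F) : X.card ≤ rmax F :=
  Finset.le_sup hX

lemma exists_card_eq_rmin (hF : F.Nonempty) : ∃ X ∈ F, X.card = rmin F := by
  obtain ⟨X, hX, hXc⟩ := Nat.sInf_mem ((Finset.coe_nonempty.mpr hF).image Finset.card)
  exact ⟨X, hX, hXc⟩

lemma exists_card_eq_rmax (hF : F.Nonempty) : ∃ X ∈ F, X.card = rmax F := by
  obtain ⟨X, hX, hXc⟩ := Finset.exists_mem_eq_sup F hF Finset.card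
  exact ⟨X, hX, hXc.symm⟩

lemma width_eq_of_extremal {X Y : Finset β} (hX : X ∈ F) (hY : Y ∈ F)
    (hbounds : ∀ Z ∈ F, X.card ≤ Z.card ∧ Z.card ≤ Y.card) :
    width F = Y.card - X.card := by
  have hmin : rmin F = X.card :=
    le_antisymm (rmin_le_card hX) (le_csInf ⟨_, X, hX, rfl⟩ (by
      rintro _ ⟨Z, hZ, rfl⟩
      exact (hbounds Z hZ).1))
  have hmax : rmax F = Y.card :=
    le_antisymm (Finset.sup_le fun Z hZ => (hbounds Z hZ).2) (card_le_rmax hY)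
  rw [width, hmin, hmax]

lemma rmin_add_two_le_card_of_mem {e : β} (hu1 : ∀ A ∈ F, A.card ≤ rmin F + 1 → e ∉ A)
    {X : Finset β} (hX : X ∈ F) (he : e ∈ X) : rmin F + 2 ≤ X.card := by
  by_contra h
  exact hu1 X hX (by omega) he

lemma card_add_two_le_rmax_of_notMem {e : β} (hu2 : ∀ B ∈ F, rmax F ≤ B.card + 1 → e ∈ B)
    {X : Finset β} (hX : X ∈ F) (he : e ∉ X) : X.card + 2 ≤ rmax F := by
  by_contra h
  exact he (hu2 X hX (by omega))

end Ranks

section TypeUU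

variable {F : Finset (Finset α)} {e : α}

lemma card_bounds_of_mem_twist (hu1 : ∀ A ∈ F, A.card ≤ rmin F + 1 → e ∉ A)
    (hu2 : ∀ B ∈ F, rmax F ≤ B.card + 1 → e ∈ B) {Y : Finset α} (hY : Y ∈ twist {e} F) :
    rmin F + 1 ≤ Y.card ∧ Y.card ≤ rmax F - 1 := by
  obtain ⟨X, hX, rfl⟩ := Finset.mem_image.mp hY
  have hlow := rmin_le_card hX
  have hhigh := card_le_rmax hX
  rw [card_singleton_symmDiff]
  split_ifs with he
  · have := rmin_add_two_le_card_of_mem hu1 hX he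
    omega
  · have := card_add_two_le_rmax_of_notMem hu2 hX he
    omega

lemma card_bounds_of_mem_lc (hu2 : ∀ B ∈ F, rmax F ≤ B.card + 1 → e ∈ B) {Y : Finset α}
    (hY : Y ∈ lc e F) : rmin F ≤ Y.card ∧ Y.card ≤ rmax F := by
  rcases mem_lc_iff.mp hY with ⟨hYF, -⟩ | ⟨he, hX, -⟩
  · exact ⟨rmin_le_card hYF, card_le_rmax hYF⟩
  · have hlow := rmin_le_card hX
    have hhigh := card_add_two_le_rmax_of_notMem hu2 hX (Finset.notMem_erase e Y)
    rw [← Finset.card_erase_add_one he]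
    omega

lemma mem_lc_of_card_eq_rmax (hu2 : ∀ B ∈ F, rmax F ≤ B.card + 1 → e ∈ B) {Y : Finset α}
    (hY : Y ∈ F) (hYc : Y.card = rmax F) : Y ∈ lc e F := by
  refine mem_lc_iff.mpr (Or.inl ⟨hY, ?_⟩)
  rintro ⟨he, hX⟩
  have := card_add_two_le_rmax_of_notMem hu2 hX (Finset.notMem_erase e Y)
  rw [Finset.card_erase_of_mem he] at this
  omega

end TypeUU

end SS

open SS

theorem stmt16 (F : Finset (Finset α)) (hD : SS.IsDeltaMatroid F) (e : α)
    (hu1 : ∀ A ∈ F, A.card ≤ SS.rmin F + 1 → e ∉ A)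
    (hu2 : ∀ B ∈ F, SS.rmax F ≤ B.card + 1 → e ∈ B) :
    SS.width (SS.twist {e} F) + 2 = SS.width F ∧
    SS.width (SS.lc e F) = SS.width F := by
  obtain ⟨X, hX, hXc⟩ := exists_card_eq_rmin hD.1
  obtain ⟨Y, hY, hYc⟩ := exists_card_eq_rmax hD.1
  have heX : e ∉ X := hu1 X hX (by omega)
  have heY : e ∈ Y := hu2 Y hY (by omega)
  have hgap := rmin_add_two_le_card_of_mem hu1 hY heY
  have hwidth : width F = rmax F - rmin F := rfl
  have hwidth_twist : width (twist {e} F) = (Y.card - 1) - (X.card + 1) := by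
    have hXt : symmDiff {e} X ∈ twist {e} F := Finset.mem_image_of_mem _ hX
    have hYt : symmDiff {e} Y ∈ twist {e} F := Finset.mem_image_of_mem _ hY
    rw [width_eq_of_extremal hXt hYt, card_singleton_symmDiff, card_singleton_symmDiff,
      if_neg heX, if_pos heY]
    intro Z hZ
    have := card_bounds_of_mem_twist hu1 hu2 hZ
    rw [card_singleton_symmDiff, card_singleton_symmDiff, if_neg heX, if_pos heY]
    omega
  have hXl : X ∈ lc e F := mem_lc_iff.mpr (Or.inl ⟨hX, fun h => heX h.1⟩)
  have hYl := mem_lc_of_card_eq_rmax hu2 hY hYc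
  have hwidth_lc : width (lc e F) = Y.card - X.card :=
    width_eq_of_extremal hXl hYl fun Z hZ => by
      have := card_bounds_of_mem_lc hu2 hZ
      omega
  omega
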